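/- Let A_{i,j} (i, j ∈ ℕ) be a doubly indexed family of abelian groups equipped with group homomorphisms s_{i,j} : A_{i,j} → A_{i+1,j} (vertical maps) and b_{i,j} : A_{i,j} → A_{i,j+1} (horizontal maps) such that every square commutes: b_{i+1,j} ∘ s_{i,j} = s_{i,j+1} ∘ b_{i,j}. Assume: (i) for all i, j and all x ∈ A_{i,j}, if s_{i,j}(x) = 0 then b_{i,j}(x) = 0; and (ii) for all i, j and all x ∈ A_{i+1,j+1}, if x = b_{i+1,j}(y) for some y ∈ A_{i+1,j}, then x = s_{i,j+1}(z) for some z ∈ A_{i,j+1}. Then the canonical homomorphism from the direct limit of the bottom row, colim_j A_{0,j} (over the maps b_{0,j}), to the direct limit colim_{(i,j) ∈ ℕ×ℕ} A_{i,j} of the whole system (over the product order on ℕ × ℕ) is an isomorphism of abelian groups. (This is the abstract direct-limit argument used in Section 9.1 to identify lim π_{n+2k}(𝕂) with lim π^S_{n+2k}(𝕂).) -/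

import Mathlib

/-!
Every class of the colimit over `ℕ × ℕ` comes from the bottom row: by (ii), an element of row `i + 1`
becomes, after one horizontal step (which does not change its class), the image of an element of
row `i`. For injectivity, an element of `A_{0,j}` that dies in that colimit dies at some
`(i, j')`; going down one row at a time, (i) trades each vertical step that kills an element for
one more horizontal step, so the element already dies in the bottom row.
-/

open CategoryTheory CategoryTheory.Limits

universe u

/-- The functor `ℕ ⥤ ℕ × ℕ`, `j ↦ (0, j)`, embedding the bottom row of a doubly indexed
direct system (here `ℕ × ℕ`, with `ℕ` the preorder category of natural numbers, is the thin
category corresponding to the componentwise product order on `ℕ × ℕ`). -/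
def bottomRow : ℕ ⥤ ℕ × ℕ :=
  Functor.prod' ((Functor.const ℕ).obj (0 : ℕ)) (𝟭 ℕ)

instance {C D : Type*} [Category C] [Category D] [Quiver.IsThin C] [Quiver.IsThin D] :
    Quiver.IsThin (C × D) :=
  fun _ _ => ⟨fun _ _ => Prod.ext (Subsingleton.elim _ _) (Subsingleton.elim _ _)⟩

lemma Functor.map_map_apply_of_isThin {J C : Type*} [Category J] [Quiver.IsThin J] [Category C]
    {FC : C → C → Type*} {CC : C → Type*} [∀ X Y, FunLike (FC X Y) (CC X) (CC Y)]
    [ConcreteCategory C FC] (F : J ⥤ C) {p q r : J} (f : p ⟶ q) (g : q ⟶ r) (h : p ⟶ r)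
    (x : ToType (F.obj p)) : F.map g (F.map f x) = F.map h x := by
  rw [← ConcreteCategory.comp_apply, ← F.map_comp, Subsingleton.elim (f ≫ g) h]

lemma AddCommGrpCat.exists_map_eq_zero_of_ι_eq_zero {J : Type u} [SmallCategory J] [IsFiltered J]
    (F : J ⥤ AddCommGrpCat.{u}) {j : J} (x : F.obj j) (hx : colimit.ι F j x = 0) :
    ∃ (k : J) (f : j ⟶ k), F.map f x = 0 := by
  rw [← map_zero (colimit.ι F j).hom, Concrete.colimit_rep_eq_iff_exists] at hx
  obtain ⟨k, f, g, hfg⟩ := hx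
  exact ⟨k, f, by rw [hfg, map_zero]⟩

lemma AddCommGrpCat.colimit_ι_pre_apply {J K : Type*} [Category J] [Category K]
    (F : J ⥤ AddCommGrpCat) (E : K ⥤ J) [HasColimit F] [HasColimit (E ⋙ F)] (k : K)
    (x : F.obj (E.obj k)) :
    colimit.pre F E (colimit.ι (E ⋙ F) k x) = colimit.ι F (E.obj k) x :=
  ConcreteCategory.congr_hom (colimit.ι_pre F E k) x

section

variable (F : ℕ × ℕ ⥤ AddCommGrpCat)

def VertKerLEHorizKer : Prop :=
  ∀ i j : ℕ, ∀ x : F.obj (i, j),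
    F.map ((homOfLE (Nat.le_succ i), homOfLE (le_refl j)) : (i, j) ⟶ (i + 1, j)) x = 0 →
    F.map ((homOfLE (le_refl i), homOfLE (Nat.le_succ j)) : (i, j) ⟶ (i, j + 1)) x = 0

def HorizRangeLEVertRange : Prop :=
  ∀ i j : ℕ, ∀ x : F.obj (i + 1, j + 1),
    (∃ y : F.obj (i + 1, j),
      F.map ((homOfLE (le_refl (i + 1)), homOfLE (Nat.le_succ j)) :
        (i + 1, j) ⟶ (i + 1, j + 1)) y = x) →
    ∃ z : F.obj (i, j + 1),
      F.map ((homOfLE (Nat.le_succ i), homOfLE (le_refl (j + 1))) :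
        (i, j + 1) ⟶ (i + 1, j + 1)) z = x

variable {F}

lemma exists_horiz_map_eq_zero (h1 : VertKerLEHorizKer F) {i j : ℕ} {p : ℕ × ℕ}
    (x : F.obj (i, j)) (f : (i, j) ⟶ p) (hx : F.map f x = 0) :
    ∃ (j' : ℕ) (g : (i, j) ⟶ (i, j')), F.map g x = 0 := by
  have hi : i ≤ p.1 := leOfHom f.1
  induction hi using Nat.decreasingInduction generalizing j with
  | self => exact ⟨p.2, f, hx⟩
  | of_succ i hi ih =>
    have hj : j ≤ p.2 := leOfHom f.2
    obtain ⟨j', g, hg⟩ := ih (F.map (homOfLE i.le_succ, 𝟙 j) x) (homOfLE hi, homOfLE hj)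
      (by rwa [Functor.map_map_apply_of_isThin])
    have hj' : j ≤ j' := leOfHom g.2
    have hw : F.map ((homOfLE i.le_succ, 𝟙 j') : (i, j') ⟶ (i + 1, j'))
        (F.map ((𝟙 i, homOfLE hj') : (i, j) ⟶ (i, j')) x) = 0 := by
      rwa [Functor.map_map_apply_of_isThin _ _ _ (homOfLE i.le_succ, homOfLE hj'),
        ← Functor.map_map_apply_of_isThin F (homOfLE i.le_succ, 𝟙 j) g]
    refine ⟨j' + 1, (𝟙 i, homOfLE (hj'.trans j'.le_succ)), ?_⟩
    rw [← Functor.map_map_apply_of_isThin F ((𝟙 i, homOfLE hj') : (i, j) ⟶ (i, j'))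
      (𝟙 i, homOfLE j'.le_succ)]
    exact h1 i j' _ hw

lemma exists_ι_bottomRow_eq (h2 : HorizRangeLEVertRange F) (i : ℕ) :
    ∀ (j : ℕ) (x : F.obj (i, j)), ∃ (k : ℕ) (z : F.obj (0, k)),
      colimit.ι F (0, k) z = colimit.ι F (i, j) x := by
  induction i with
  | zero => exact fun j x => ⟨j, x, rfl⟩
  | succ i ih =>
    intro j x
    obtain ⟨z, hz⟩ := h2 i j _ ⟨x, rfl⟩
    obtain ⟨k, w, hw⟩ := ih (j + 1) z
    refine ⟨k, w, ?_⟩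
    rw [hw, ← colimit.w_apply F ((homOfLE i.le_succ, homOfLE le_rfl) :
      (i, j + 1) ⟶ (i + 1, j + 1)) z, hz, colimit.w_apply]

lemma colimit_pre_bottomRow_injective (h1 : VertKerLEHorizKer F) :
    Function.Injective (colimit.pre F bottomRow) := by
  refine (injective_iff_map_eq_zero _).2 fun c hc => ?_
  obtain ⟨j, x, rfl⟩ := Concrete.colimit_exists_rep (bottomRow ⋙ F) c
  rw [AddCommGrpCat.colimit_ι_pre_apply] at hc
  obtain ⟨p, f, hf⟩ := AddCommGrpCat.exists_map_eq_zero_of_ι_eq_zero F x hc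
  obtain ⟨j', g, hg⟩ := exists_horiz_map_eq_zero (i := 0) (j := j) h1 x f hf
  -- morphisms of `ℕ` are proofs, so `bottomRow.map g.2` and `g` agree definitionally
  have hg' : (bottomRow ⋙ F).map g.2 x = 0 := hg
  rw [← colimit.w_apply (bottomRow ⋙ F) g.2, hg', map_zero]

lemma colimit_pre_bottomRow_surjective (h2 : HorizRangeLEVertRange F) :
    Function.Surjective (colimit.pre F bottomRow) := by
  intro c
  obtain ⟨⟨i, j⟩, x, rfl⟩ := Concrete.colimit_exists_rep F c
  obtain ⟨k, z, hz⟩ := exists_ι_bottomRow_eq h2 i j x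
  exact ⟨colimit.ι (bottomRow ⋙ F) k z,
    (AddCommGrpCat.colimit_ι_pre_apply F bottomRow k z).trans hz⟩

end

/-- Let `F` be a doubly indexed direct system of abelian groups over `ℕ × ℕ`
(with its componentwise order), with vertical one-step maps
`s_{i,j} = F.map ((i,j) ⟶ (i+1,j))` and horizontal one-step maps
`b_{i,j} = F.map ((i,j) ⟶ (i,j+1))`; commutativity of all squares is automatic since
`ℕ × ℕ` is a thin category.  Assume (i) `s_{i,j}(x) = 0 → b_{i,j}(x) = 0`, and
(ii) every element of `F.obj (i+1, j+1)` in the image of `b_{i+1,j}` is in the image of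
`s_{i,j+1}`.  Then the canonical homomorphism from the direct limit of the bottom row
`colim_j F.obj (0, j)` to the direct limit of the whole system is an isomorphism of abelian
groups. -/
theorem statement8 (F : ℕ × ℕ ⥤ AddCommGrpCat)
    (h1 : ∀ i j : ℕ, ∀ x : F.obj (i, j),
      F.map ((homOfLE (Nat.le_succ i), homOfLE (le_refl j)) : (i, j) ⟶ (i + 1, j)) x = 0 →
      F.map ((homOfLE (le_refl i), homOfLE (Nat.le_succ j)) : (i, j) ⟶ (i, j + 1)) x = 0)
    (h2 : ∀ i j : ℕ, ∀ x : F.obj (i + 1, j + 1),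
      (∃ y : F.obj (i + 1, j),
        F.map ((homOfLE (le_refl (i + 1)), homOfLE (Nat.le_succ j)) :
          (i + 1, j) ⟶ (i + 1, j + 1)) y = x) →
      ∃ z : F.obj (i, j + 1),
        F.map ((homOfLE (Nat.le_succ i), homOfLE (le_refl (j + 1))) :
          (i, j + 1) ⟶ (i + 1, j + 1)) z = x) :
    IsIso (colimit.pre F bottomRow) :=
  (ConcreteCategory.isIso_iff_bijective _).2
    ⟨colimit_pre_bottomRow_injective h1, colimit_pre_bottomRow_surjective h2⟩
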